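/- arXiv:1909.06606 — 6 statements merged into one kernel-verified Lean document; each statement's English description precedes it below -/
import Mathlib

section
/- Let X, Y, Z be real Banach spaces with continuous injective embeddings j₁ : X → Y and j₂ : Y → Z, let U be an open neighborhood of (0,0) in X × ℝ, let F : X × ℝ → Z be continuously Fréchet differentiable, and let G : U → L(Y,Z) be a continuous map into the bounded linear operators from Y to Z such that G(x,s) ∘ j₁ equals the partial Fréchet derivative ∂ₓF(x,s) for every (x,s) ∈ U. If x : [0,ε) → X is continuous, (x(s),s) ∈ U for all s ∈ [0,ε), and s ↦ j₁(x(s)) is continuously differentiable as a map into Y with derivative y(s), then the Z-valued map s ↦ F(x(s),s) is continuously differentiable on [0,ε) and its derivative is G(x(s),s)[y(s)] + ∂ₛF(x(s),s). -/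
open Set Filter Topology Asymptotics

/-!
On `U` the derivative of `F` factors as `DF(p) = H(p) ∘ (j₁ × id)`, where
`H(p)(v, τ) = G(p) v + τ • ∂ₛF(p)` depends continuously on `p`. The mean value inequality along
the segment from `q` to `p` then gives `F p - F q - H q (J (p - q)) = o(‖J (p - q)‖)` with
`J = j₁ × id`: `F` is differentiable at `q` for the weaker norm of `Y × ℝ`. Composing with the
curve `t ↦ J (x t, t)`, which is differentiable in `Y × ℝ` with derivative `(y s, 1)`, yields
the derivative `H (x s, s) (y s, 1)`.
-/

theorem isLittleO_sub_of_hasFDerivAt_comp {E W Z : Type*}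
    [NormedAddCommGroup E] [NormedSpace ℝ E] [NormedAddCommGroup W] [NormedSpace ℝ W]
    [NormedAddCommGroup Z] [NormedSpace ℝ Z]
    {F : E → Z} {J : E →L[ℝ] W} {H : E → W →L[ℝ] Z} {q : E}
    (hF : ∀ᶠ p in 𝓝 q, HasFDerivAt F ((H p).comp J) p) (hH : ContinuousAt H q) :
    (fun p => F p - F q - H q (J (p - q))) =o[𝓝 q] fun p => J (p - q) := by
  refine isLittleO_iff.2 fun c hc => ?_
  have hHnear : ∀ᶠ p in 𝓝 q, ‖H p - H q‖ ≤ c := by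
    simpa only [← dist_eq_norm] using hH.eventually (Metric.closedBall_mem_nhds (H q) hc)
  obtain ⟨δ, hδ, hball⟩ := Metric.eventually_nhds_iff_ball.1 (hF.and hHnear)
  filter_upwards [Metric.ball_mem_nhds q hδ] with p hp
  have hseg : ∀ θ ∈ Icc (0 : ℝ) 1, q + θ • (p - q) ∈ Metric.ball q δ := fun θ hθ =>
    (convex_ball q δ).add_smul_sub_mem (Metric.mem_ball_self hδ) hp hθ
  have hderiv : ∀ θ ∈ Icc (0 : ℝ) 1,
      HasDerivWithinAt (fun θ : ℝ => F (q + θ • (p - q)) - θ • H q (J (p - q)))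
        ((H (q + θ • (p - q)) - H q) (J (p - q))) (Icc 0 1) θ := by
    intro θ hθ
    have hline : HasDerivAt (fun θ : ℝ => q + θ • (p - q)) (p - q) θ := by
      simpa using ((hasDerivAt_id θ).smul_const (p - q)).const_add q
    have := ((hball _ (hseg θ hθ)).1.comp_hasDerivAt θ hline).sub
      ((hasDerivAt_id θ).smul_const (H q (J (p - q))))
    simpa only [Function.comp_def, ContinuousLinearMap.comp_apply,
      sub_apply, id, one_smul, Pi.sub_def] using this.hasDerivWithinAt
  have hbound : ∀ θ ∈ Ico (0 : ℝ) 1,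
      ‖(H (q + θ • (p - q)) - H q) (J (p - q))‖ ≤ c * ‖J (p - q)‖ := fun θ hθ =>
    ((H _ - H q).le_opNorm _).trans <|
      mul_le_mul_of_nonneg_right (hball _ (hseg θ (Ico_subset_Icc_self hθ))).2 (norm_nonneg _)
  have := norm_image_sub_le_of_norm_deriv_le_segment_01' hderiv hbound
  simpa only [one_smul, zero_smul, add_sub_cancel, add_zero, sub_zero, sub_right_comm]
    using this

theorem HasDerivWithinAt.clm_apply_of_isLittleO {W Z : Type*}
    [NormedAddCommGroup W] [NormedSpace ℝ W] [NormedAddCommGroup Z] [NormedSpace ℝ Z]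
    {g : ℝ → Z} {h : ℝ → W} {h' : W} {L : W →L[ℝ] Z} {S : Set ℝ} {s : ℝ}
    (hh : HasDerivWithinAt h h' S s)
    (hg : (fun t => g t - g s - L (h t - h s)) =o[𝓝[S] s] fun t => h t - h s) :
    HasDerivWithinAt g (L h') S s := by
  have hrem := hg.trans_isBigO hh.hasFDerivWithinAt.isBigO_sub
  have hlin := L.isBigO_comp _ _ |>.trans_isLittleO (hasDerivWithinAt_iff_isLittleO.1 hh)
  refine hasDerivWithinAt_iff_isLittleO.2 <| (hrem.add hlin).congr_left fun t => ?_
  simp only [map_sub, map_smul]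
  abel

theorem ContinuousLinearMap.eq_comp_prodMap_of_apply_inl {X Y T Z : Type*}
    [NormedAddCommGroup X] [NormedSpace ℝ X] [NormedAddCommGroup Y] [NormedSpace ℝ Y]
    [NormedAddCommGroup T] [NormedSpace ℝ T] [NormedAddCommGroup Z] [NormedSpace ℝ Z]
    {j : X →L[ℝ] Y} {A : X × T →L[ℝ] Z} {B : Y →L[ℝ] Z} (h : ∀ v, B (j v) = A (v, 0)) :
    A = (B.comp (fst ℝ Y T) + A.comp ((inr ℝ X T).comp (snd ℝ Y T))).comp
      (j.prodMap (.id ℝ T)) :=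
  ext fun ⟨v, τ⟩ => by simp [h, ← map_add]

theorem statement0_general
    {X Y Z : Type*}
    [NormedAddCommGroup X] [NormedSpace ℝ X]
    [NormedAddCommGroup Y] [NormedSpace ℝ Y]
    [NormedAddCommGroup Z] [NormedSpace ℝ Z]
    (j₁ : X →L[ℝ] Y)
    (U : Set (X × ℝ)) (hU : IsOpen U)
    (F : X × ℝ → Z) (hF : ContDiff ℝ 1 F)
    (G : X × ℝ → (Y →L[ℝ] Z)) (hG : ContinuousOn G U)
    (hGext : ∀ p ∈ U, ∀ v : X, G p (j₁ v) = fderiv ℝ F p (v, 0))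
    (ε : ℝ)
    (x : ℝ → X) (hx : ContinuousOn x (Set.Ico 0 ε))
    (hxU : ∀ s ∈ Set.Ico (0 : ℝ) ε, (x s, s) ∈ U)
    (y : ℝ → Y)
    (hy : ∀ s ∈ Set.Ico (0 : ℝ) ε,
      HasDerivWithinAt (fun t => j₁ (x t)) (y s) (Set.Ico 0 ε) s)
    (hycont : ContinuousOn y (Set.Ico 0 ε)) :
    (∀ s ∈ Set.Ico (0 : ℝ) ε,
      HasDerivWithinAt (fun t => F (x t, t))
        (G (x s, s) (y s) + fderiv ℝ F (x s, s) (0, 1)) (Set.Ico 0 ε) s) ∧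
    ContinuousOn (fun s => G (x s, s) (y s) + fderiv ℝ F (x s, s) (0, 1))
      (Set.Ico 0 ε) := by
  open ContinuousLinearMap in
  let H : X × ℝ → Y × ℝ →L[ℝ] Z := fun p =>
    (G p).comp (fst ℝ Y ℝ) + (fderiv ℝ F p).comp ((inr ℝ X ℝ).comp (snd ℝ Y ℝ))
  have hH : ContinuousOn H U := (hG.clm_comp continuousOn_const).add
    ((hF.continuous_fderiv one_ne_zero).continuousOn.clm_comp continuousOn_const)
  have hFH : ∀ p ∈ U, HasFDerivAt F ((H p).comp (j₁.prodMap (.id ℝ ℝ))) p := fun p hp =>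
    ContinuousLinearMap.eq_comp_prodMap_of_apply_inl (hGext p hp) ▸
      (hF.differentiable one_ne_zero p).hasFDerivAt
  have hpath : ContinuousOn (fun t => (x t, t)) (Ico 0 ε) := hx.prodMk continuousOn_id
  refine ⟨fun s hs => ?_, ?_⟩
  · have hcurve : HasDerivWithinAt (fun t => (j₁ (x t), t)) (y s, 1) (Ico 0 ε) s :=
      (hy s hs).prodMk (hasDerivWithinAt_id s _)
    have hrem := (isLittleO_sub_of_hasFDerivAt_comp
      (eventually_of_mem (hU.mem_nhds (hxU s hs)) hFH)
      (hH.continuousAt (hU.mem_nhds (hxU s hs)))).comp_tendsto (hpath s hs)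
    simp only [Function.comp_def] at hrem
    refine (hcurve.clm_apply_of_isLittleO (L := H (x s, s)) ?_).congr_deriv (by simp [H])
    simpa only [Prod.mk_sub_mk, ContinuousLinearMap.coe_prodMap', Prod.map_apply,
      ContinuousLinearMap.id_apply, map_sub] using hrem
  · have hy1 : ContinuousOn (fun s => (y s, (1 : ℝ))) (Ico 0 ε) :=
      hycont.prodMk continuousOn_const
    exact ((hH.comp hpath hxU).clm_apply hy1).congr fun s _ => by simp [H]

/-- Differentiating `s ↦ F(x(s), s)` along a curve `x` that is only `C¹` into the
larger space `Y`, where the partial derivative `∂ₓF` admits a continuous extension `G` to `Y`. -/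
theorem statement0
    {X Y Z : Type*}
    [NormedAddCommGroup X] [NormedSpace ℝ X] [CompleteSpace X]
    [NormedAddCommGroup Y] [NormedSpace ℝ Y] [CompleteSpace Y]
    [NormedAddCommGroup Z] [NormedSpace ℝ Z] [CompleteSpace Z]
    (j₁ : X →L[ℝ] Y) (j₂ : Y →L[ℝ] Z)
    (hj₁ : Function.Injective j₁) (hj₂ : Function.Injective j₂)
    (U : Set (X × ℝ)) (hU : IsOpen U) (hU0 : ((0 : X), (0 : ℝ)) ∈ U)
    (F : X × ℝ → Z) (hF : ContDiff ℝ 1 F)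
    (G : X × ℝ → (Y →L[ℝ] Z)) (hG : ContinuousOn G U)
    (hGext : ∀ p ∈ U, ∀ v : X, G p (j₁ v) = fderiv ℝ F p (v, 0))
    (ε : ℝ) (hε : 0 < ε)
    (x : ℝ → X) (hx : ContinuousOn x (Set.Ico 0 ε))
    (hxU : ∀ s ∈ Set.Ico (0 : ℝ) ε, (x s, s) ∈ U)
    (y : ℝ → Y)
    (hy : ∀ s ∈ Set.Ico (0 : ℝ) ε,
      HasDerivWithinAt (fun t => j₁ (x t)) (y s) (Set.Ico 0 ε) s)
    (hycont : ContinuousOn y (Set.Ico 0 ε)) :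
    (∀ s ∈ Set.Ico (0 : ℝ) ε,
      HasDerivWithinAt (fun t => F (x t, t))
        (G (x s, s) (y s) + fderiv ℝ F (x s, s) (0, 1)) (Set.Ico 0 ε) s) ∧
    ContinuousOn (fun s => G (x s, s) (y s) + fderiv ℝ F (x s, s) (0, 1))
      (Set.Ico 0 ε) :=
  statement0_general j₁ U hU F hF G hG hGext ε x hx hxU y hy hycont
end

section
/- Let X, Y, Z be real Banach spaces with continuous injective embeddings j₁ : X → Y and j₂ : Y → Z, let U be an open neighborhood of (0,0) in X × ℝ, let F : X × ℝ → Z be continuously Fréchet differentiable with F(0,0) = 0, and let G : U → L(Y,Z) be continuous with G(x,s) ∘ j₁ = ∂ₓF(x,s) for all (x,s) ∈ U, such that each G(x,s) is a bijection with bounded inverse G(x,s)⁻¹ ∈ L(Z,Y). Suppose x : [0,ε) → X is continuous with (x(s),s) ∈ U for all s, and s ↦ j₁(x(s)) is continuously differentiable into Y with derivative y(s). Then the following are equivalent: (i) x(0) = 0 and F(x(s),s) = 0 for all s ∈ [0,ε); (ii) x(0) = 0 and y(s) + G(x(s),s)⁻¹[∂ₛF(x(s),s)] = 0 in Y for all s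 ∈ [0,ε). -/
/-!
The curve `s ↦ x s` is differentiable only as a `Y`-valued curve, so the usual chain rule does not
apply to `s ↦ F (x s, s)`. But the `X`-part of `DF q` extends to `G q` on `Y`, continuously in `q`,
so the mean value inequality on segments shows that `F` is differentiable at each point relative
to the coarser norm `‖j₁ ·‖`, and this is enough to get
`d/ds F (x s, s) = G (x s, s) (y s) + ∂ₛF (x s, s)`. Applying the inverse of `G`, the evolution
equation says exactly that this derivative vanishes, and on the interval `[0, ε)` this is
equivalent to `F (x s, s)` being constantly `F (0, 0) = 0`.
-/

open Set Filter Topology Asymptotics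

section RelativeDerivative

variable {E V Z : Type*} [NormedAddCommGroup E] [NormedSpace ℝ E]
  [NormedAddCommGroup V] [NormedSpace ℝ V] [NormedAddCommGroup Z] [NormedSpace ℝ Z]
  {F : E → Z} {J : E →L[ℝ] V} {Φ : E → V →L[ℝ] Z}

theorem norm_sub_sub_le_of_hasFDerivAt_comp_on_segment {p q : E} {C : ℝ}
    (hF : ∀ r ∈ segment ℝ p q, HasFDerivAt F ((Φ r).comp J) r)
    (hΦ : ∀ r ∈ segment ℝ p q, ‖Φ r - Φ p‖ ≤ C) :
    ‖F q - F p - Φ p (J q - J p)‖ ≤ C * ‖J q - J p‖ := by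
  set w := q - p
  have hseg : ∀ θ ∈ Icc (0 : ℝ) 1, p + θ • w ∈ segment ℝ p q := fun θ hθ => by
    rw [segment_eq_image']; exact ⟨θ, hθ, rfl⟩
  -- Differentiating along the segment, not in `E`, makes the bound scale with `‖J w‖`, not `‖w‖`.
  have hderiv : ∀ θ ∈ Icc (0 : ℝ) 1,
      HasDerivWithinAt (fun θ : ℝ => F (p + θ • w) - θ • Φ p (J w))
        ((Φ (p + θ • w) - Φ p) (J w)) (Icc 0 1) θ := by
    intro θ hθ
    have hline : HasDerivAt (fun θ : ℝ => p + θ • w) w θ := by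
      simpa using ((hasDerivAt_id θ).smul_const w).const_add p
    have := ((hF _ (hseg θ hθ)).comp_hasDerivAt θ hline).sub
      ((hasDerivAt_id θ).smul_const (Φ p (J w)))
    exact (this.congr_deriv (by simp)).hasDerivWithinAt
  have := norm_image_sub_le_of_norm_deriv_le_segment_01' hderiv fun θ hθ =>
    ((Φ _ - Φ p).le_opNorm (J w)).trans <|
      mul_le_mul_of_nonneg_right (hΦ _ (hseg θ (Ico_subset_Icc_self hθ))) (norm_nonneg _)
  convert this using 2
  · simp [w, map_sub]
    abel
  · simp [w, map_sub]

theorem isLittleO_sub_sub_of_eventually_hasFDerivAt_comp {p : E}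
    (hF : ∀ᶠ q in 𝓝 p, HasFDerivAt F ((Φ q).comp J) q) (hΦ : ContinuousAt Φ p) :
    (fun q => F q - F p - Φ p (J q - J p)) =o[𝓝 p] fun q => J q - J p := by
  refine isLittleO_iff.2 fun c hc => ?_
  obtain ⟨ρ, hρ, hball⟩ := Metric.eventually_nhds_iff_ball.1
    (hF.and (hΦ.eventually (Metric.closedBall_mem_nhds _ hc)))
  filter_upwards [Metric.ball_mem_nhds p hρ] with q hq
  have hseg : segment ℝ p q ⊆ Metric.ball p ρ :=
    (convex_ball p ρ).segment_subset (Metric.mem_ball_self hρ) hq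
  exact norm_sub_sub_le_of_hasFDerivAt_comp_on_segment (fun r hr => (hball r (hseg hr)).1)
    fun r hr => by simpa [dist_eq_norm] using (hball r (hseg hr)).2

theorem HasDerivWithinAt.comp_of_eventually_hasFDerivAt_comp {γ : ℝ → E} {v : V}
    {S : Set ℝ} {s : ℝ}
    (hF : ∀ᶠ q in 𝓝 (γ s), HasFDerivAt F ((Φ q).comp J) q) (hΦ : ContinuousAt Φ (γ s))
    (hγ : ContinuousWithinAt γ S s) (hJγ : HasDerivWithinAt (fun t => J (γ t)) v S s) :
    HasDerivWithinAt (fun t => F (γ t)) (Φ (γ s) v) S s := by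
  have hrem : HasDerivWithinAt (fun t => F (γ t) - Φ (γ s) (J (γ t))) 0 S s := by
    rw [hasDerivWithinAt_iff_isLittleO]
    refine (((isLittleO_sub_sub_of_eventually_hasFDerivAt_comp hF hΦ).comp_tendsto hγ).trans_isBigO
      hJγ.hasFDerivWithinAt.isBigO_sub).congr (fun t => ?_) fun _ => rfl
    simp only [Function.comp_apply, map_sub, smul_zero, sub_zero]
    abel
  convert hrem.add ((Φ (γ s)).hasFDerivAt.comp_hasDerivWithinAt s hJγ) using 1
  · ext t; simp
  · simp

end RelativeDerivative

section ImplicitCurve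

variable {X Y Z : Type*} [NormedAddCommGroup X] [NormedSpace ℝ X]
  [NormedAddCommGroup Y] [NormedSpace ℝ Y] [NormedAddCommGroup Z] [NormedSpace ℝ Z]

theorem apply_add_eq_zero_iff_add_inverse_apply_eq_zero {A : Y →L[ℝ] Z} {B : Z →L[ℝ] Y}
    (hAB : ∀ z, A (B z) = z) (hBA : ∀ w, B (A w) = w) (w : Y) (z : Z) :
    A w + z = 0 ↔ w + B z = 0 :=
  ⟨fun h => by simpa [hBA] using congrArg B h, fun h => by simpa [hAB] using congrArg A h⟩

theorem hasDerivWithinAt_apply_curve_of_extension {j : X →L[ℝ] Y} {U : Set (X × ℝ)}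
    (hU : IsOpen U) {F : X × ℝ → Z} (hF : ContDiff ℝ 1 F) {G : X × ℝ → Y →L[ℝ] Z}
    (hG : ContinuousOn G U) (hGext : ∀ p ∈ U, ∀ v : X, G p (j v) = fderiv ℝ F p (v, 0))
    {S : Set ℝ} {x : ℝ → X} {y : Y} {s : ℝ} (hx : ContinuousWithinAt x S s)
    (hxU : (x s, s) ∈ U) (hy : HasDerivWithinAt (fun t => j (x t)) y S s) :
    HasDerivWithinAt (fun t => F (x t, t)) (G (x s, s) y + fderiv ℝ F (x s, s) (0, 1)) S s := by
  let J : X × ℝ →L[ℝ] Y × ℝ := j.prodMap (ContinuousLinearMap.id ℝ ℝ)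
  let Φ : X × ℝ → Y × ℝ →L[ℝ] Z := fun q =>
    (G q).comp (ContinuousLinearMap.fst ℝ Y ℝ) +
      (fderiv ℝ F q).comp ((ContinuousLinearMap.inr ℝ X ℝ).comp (ContinuousLinearMap.snd ℝ Y ℝ))
  have hΦJ : ∀ q ∈ U, (Φ q).comp J = fderiv ℝ F q := fun q hq =>
    ContinuousLinearMap.ext fun ⟨v, r⟩ => by
      simp [Φ, J, hGext q hq, ← map_add]
  have hFΦ : ∀ᶠ q in 𝓝 (x s, s), HasFDerivAt F ((Φ q).comp J) q := by
    filter_upwards [hU.mem_nhds hxU] with q hq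
    rw [hΦJ q hq]
    exact (hF.differentiable one_ne_zero q).hasFDerivAt
  have hΦ : ContinuousAt Φ (x s, s) :=
    ((hG.continuousAt (hU.mem_nhds hxU)).clm_comp continuousAt_const).add
      ((hF.continuous_fderiv one_ne_zero).continuousAt.clm_comp continuousAt_const)
  have hJγ : HasDerivWithinAt (fun t => J (x t, t)) (y, 1) S s :=
    hy.prodMk (hasDerivWithinAt_id s S)
  simpa [Φ] using HasDerivWithinAt.comp_of_eventually_hasFDerivAt_comp (γ := fun t => (x t, t))
    hFΦ hΦ (hx.prodMk continuousWithinAt_id) hJγ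

end ImplicitCurve

theorem statement1_general
    {X Y Z : Type*}
    [NormedAddCommGroup X] [NormedSpace ℝ X]
    [NormedAddCommGroup Y] [NormedSpace ℝ Y]
    [NormedAddCommGroup Z] [NormedSpace ℝ Z]
    (j₁ : X →L[ℝ] Y)
    (U : Set (X × ℝ)) (hU : IsOpen U)
    (F : X × ℝ → Z) (hF : ContDiff ℝ 1 F) (hF00 : F (0, 0) = 0)
    (G : X × ℝ → (Y →L[ℝ] Z)) (hG : ContinuousOn G U)
    (hGext : ∀ p ∈ U, ∀ v : X, G p (j₁ v) = fderiv ℝ F p (v, 0))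
    (Ginv : X × ℝ → (Z →L[ℝ] Y))
    (hGinv₁ : ∀ p ∈ U, ∀ z : Z, G p (Ginv p z) = z)
    (hGinv₂ : ∀ p ∈ U, ∀ w : Y, Ginv p (G p w) = w)
    (ε : ℝ)
    (x : ℝ → X) (hx : ContinuousOn x (Set.Ico 0 ε))
    (hxU : ∀ s ∈ Set.Ico (0 : ℝ) ε, (x s, s) ∈ U)
    (y : ℝ → Y)
    (hy : ∀ s ∈ Set.Ico (0 : ℝ) ε,
      HasDerivWithinAt (fun t => j₁ (x t)) (y s) (Set.Ico 0 ε) s) :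
    (x 0 = 0 ∧ ∀ s ∈ Set.Ico (0 : ℝ) ε, F (x s, s) = 0) ↔
    (x 0 = 0 ∧ ∀ s ∈ Set.Ico (0 : ℝ) ε,
      y s + Ginv (x s, s) (fderiv ℝ F (x s, s) (0, 1)) = 0) := by
  have hderiv : ∀ s ∈ Ico (0 : ℝ) ε, HasDerivWithinAt (fun t => F (x t, t))
      (G (x s, s) (y s) + fderiv ℝ F (x s, s) (0, 1)) (Ico 0 ε) s := fun s hs =>
    hasDerivWithinAt_apply_curve_of_extension hU hF hG hGext (hx s hs) (hxU s hs) (hy s hs)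
  have hiff : ∀ s ∈ Ico (0 : ℝ) ε, G (x s, s) (y s) + fderiv ℝ F (x s, s) (0, 1) = 0 ↔
      y s + Ginv (x s, s) (fderiv ℝ F (x s, s) (0, 1)) = 0 := fun s hs =>
    apply_add_eq_zero_iff_add_inverse_apply_eq_zero (hGinv₁ _ (hxU s hs)) (hGinv₂ _ (hxU s hs)) _ _
  refine and_congr_right fun hx0 => ⟨fun hzero s hs => ?_, fun hsol s hs => ?_⟩
  · rw [← hiff s hs]
    exact (uniqueDiffOn_Ico 0 ε s hs).eq_deriv _ (hderiv s hs)
      ((hasDerivWithinAt_const s _ 0).congr hzero (hzero s hs))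
  · have hzero : ∀ t ∈ Ico (0 : ℝ) ε, HasDerivWithinAt (fun t => F (x t, t)) 0 (Ico 0 ε) t :=
      fun t ht => (hiff t ht).2 (hsol t ht) ▸ hderiv t ht
    have h0 : (0 : ℝ) ∈ Ico 0 ε := ⟨le_rfl, hs.1.trans_lt hs.2⟩
    have := (convex_Ico 0 ε).norm_image_sub_le_of_norm_hasDerivWithin_le hzero
      (fun _ _ => norm_zero.le) h0 hs
    rwa [zero_mul, norm_le_zero_iff, sub_eq_zero, hx0, hF00] at this

/-- Abstract implicit-function characterization: along a `C¹`-curve (into `Y`),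
`F(x(s),s) = 0` for all `s` with `x(0) = 0` iff `x` solves the evolution equation
`x'(s) + ∂ₓF(x(s),s)⁻¹ ∂ₛF(x(s),s) = 0`, `x(0) = 0`. -/
theorem statement1
    {X Y Z : Type*}
    [NormedAddCommGroup X] [NormedSpace ℝ X] [CompleteSpace X]
    [NormedAddCommGroup Y] [NormedSpace ℝ Y] [CompleteSpace Y]
    [NormedAddCommGroup Z] [NormedSpace ℝ Z] [CompleteSpace Z]
    (j₁ : X →L[ℝ] Y) (j₂ : Y →L[ℝ] Z)
    (hj₁ : Function.Injective j₁) (hj₂ : Function.Injective j₂)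
    (U : Set (X × ℝ)) (hU : IsOpen U) (hU0 : ((0 : X), (0 : ℝ)) ∈ U)
    (F : X × ℝ → Z) (hF : ContDiff ℝ 1 F) (hF00 : F (0, 0) = 0)
    (G : X × ℝ → (Y →L[ℝ] Z)) (hG : ContinuousOn G U)
    (hGext : ∀ p ∈ U, ∀ v : X, G p (j₁ v) = fderiv ℝ F p (v, 0))
    (Ginv : X × ℝ → (Z →L[ℝ] Y))
    (hGinv₁ : ∀ p ∈ U, ∀ z : Z, G p (Ginv p z) = z)
    (hGinv₂ : ∀ p ∈ U, ∀ w : Y, Ginv p (G p w) = w)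
    (ε : ℝ) (hε : 0 < ε)
    (x : ℝ → X) (hx : ContinuousOn x (Set.Ico 0 ε))
    (hxU : ∀ s ∈ Set.Ico (0 : ℝ) ε, (x s, s) ∈ U)
    (y : ℝ → Y)
    (hy : ∀ s ∈ Set.Ico (0 : ℝ) ε,
      HasDerivWithinAt (fun t => j₁ (x t)) (y s) (Set.Ico 0 ε) s)
    (hycont : ContinuousOn y (Set.Ico 0 ε)) :
    (x 0 = 0 ∧ ∀ s ∈ Set.Ico (0 : ℝ) ε, F (x s, s) = 0) ↔
    (x 0 = 0 ∧ ∀ s ∈ Set.Ico (0 : ℝ) ε,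
      y s + Ginv (x s, s) (fderiv ℝ F (x s, s) (0, 1)) = 0) :=
  statement1_general j₁ U hU F hF hF00 G hG hGext Ginv hGinv₁ hGinv₂ ε x hx hxU y hy
end

section
/- Let n ≥ 3, 0 < r < 1, and define u : EuclideanSpace ℝ (Fin n) \ {0} → ℝ by u(x) = (‖x‖^(2−n) − 1)/(r^(2−n) − 1). Then u is harmonic on the open annulus {x : r < ‖x‖ < 1}, u(x) = 0 whenever ‖x‖ = 1, u(x) = 1 whenever ‖x‖ = r, and for every x with ‖x‖ = r the directional derivative of u at x in the direction ν = −x/‖x‖ (the unit outer normal to the annulus at its inner boundary) equals (n−2)/(r(1 − r^(n−2))). -/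
/-- `f` is harmonic on the open set `U`: it is `C²` on `U` and the sum of its
second partial derivatives in the standard coordinate directions vanishes on `U`. -/
def IsHarmonicOn {n : ℕ} (f : EuclideanSpace ℝ (Fin n) → ℝ)
    (U : Set (EuclideanSpace ℝ (Fin n))) : Prop :=
  ContDiffOn ℝ 2 f U ∧
  ∀ x ∈ U, ∑ i : Fin n,
    fderiv ℝ (fun y => fderiv ℝ f y (EuclideanSpace.single i 1)) x
      (EuclideanSpace.single i 1) = 0

/-!
Away from the origin `u` is an affine function of `‖x‖ ^ p` with `p = 2 - n`. For `x ≠ 0` the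
Hessian of `‖x‖ ^ p` is `p ‖x‖ ^ (p - 2) (I + (p - 2) x xᵀ / ‖x‖²)`, whose trace
`p (p + n - 2) ‖x‖ ^ (p - 2)` vanishes exactly for `p = 2 - n` (or `p = 0`). The radial derivative
of `‖x‖ ^ p` is `p ‖x‖ ^ (p - 1)`, which at `‖x‖ = r` gives the normal derivative after
factoring `r ^ (2 - n) - 1 = r ^ (1 - n) · r (1 - r ^ (n - 2))`.
-/

open RealInnerProductSpace

section NormRpow

variable {E : Type*} [NormedAddCommGroup E] [InnerProductSpace ℝ E] {x : E}

theorem hasFDerivAt_norm_rpow_of_ne_zero (p : ℝ) (hx : x ≠ 0) :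
    HasFDerivAt (fun y : E ↦ ‖y‖ ^ p) ((p * ‖x‖ ^ (p - 2)) • innerSL ℝ x) x := by
  have hsq : ‖x‖ ^ 2 ≠ 0 := by positivity
  convert (hasStrictFDerivAt_norm_sq x).hasFDerivAt.rpow_const (p := p / 2) (.inl hsq) using 1
  · ext y
    rw [← Real.rpow_natCast_mul (norm_nonneg y)]
    ring_nf
  · ext v
    simp only [smul_apply, smul_eq_mul, nsmul_eq_mul]
    rw [← Real.rpow_natCast_mul (norm_nonneg x)]
    ring_nf

theorem contDiffAt_norm_rpow_of_ne_zero (p : ℝ) (hx : x ≠ 0) {k : WithTop ℕ∞} :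
    ContDiffAt ℝ k (fun y : E ↦ ‖y‖ ^ p) x :=
  (contDiffAt_norm ℝ hx).rpow_const_of_ne (norm_ne_zero_iff.mpr hx)

theorem fderiv_norm_rpow_apply_inv_norm_smul_self (p : ℝ) (hx : x ≠ 0) :
    fderiv ℝ (fun y : E ↦ ‖y‖ ^ p) x (‖x‖⁻¹ • x) = p * ‖x‖ ^ (p - 1) := by
  have hx' : ‖x‖ ≠ 0 := norm_ne_zero_iff.mpr hx
  rw [(hasFDerivAt_norm_rpow_of_ne_zero p hx).fderiv, smul_apply,
    innerSL_apply_apply, real_inner_smul_right, real_inner_self_eq_norm_sq, smul_eq_mul]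
  have : ‖x‖ ^ (p - 1) = ‖x‖ ^ (p - 2) * ‖x‖ := by rw [← Real.rpow_add_one hx']; ring_nf
  rw [this]
  field_simp

theorem fderiv_fderiv_norm_rpow_apply (p : ℝ) (hx : x ≠ 0) (e : E) :
    fderiv ℝ (fun y ↦ fderiv ℝ (fun z : E ↦ ‖z‖ ^ p) y e) x e =
      p * (p - 2) * ‖x‖ ^ (p - 4) * ⟪x, e⟫ ^ 2 + p * ‖x‖ ^ (p - 2) * ‖e‖ ^ 2 := by
  have hloc : (fun y ↦ fderiv ℝ (fun z : E ↦ ‖z‖ ^ p) y e) =ᶠ[nhds x]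
      fun y ↦ p * ‖y‖ ^ (p - 2) * ⟪y, e⟫ := by
    filter_upwards [isOpen_compl_singleton.mem_nhds hx] with y hy
    rw [(hasFDerivAt_norm_rpow_of_ne_zero p hy).fderiv]
    rfl
  have hinner : HasFDerivAt (fun y : E ↦ ⟪y, e⟫) (innerSL ℝ e) x := by
    convert (innerSL ℝ e).hasFDerivAt using 1
    ext y
    exact (real_inner_comm y e).symm
  have hpow := ((hasFDerivAt_norm_rpow_of_ne_zero (p - 2) hx).const_mul p).fun_mul hinner
  rw [hloc.fderiv_eq, hpow.fderiv]
  simp only [add_apply, smul_apply, smul_eq_mul,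
    innerSL_apply_apply, real_inner_self_eq_norm_sq]
  ring_nf

end NormRpow

theorem fderiv_sub_const_div {E : Type*} [NormedAddCommGroup E] [NormedSpace ℝ E]
    (f : E → ℝ) (a c : ℝ) (x : E) :
    fderiv ℝ (fun y ↦ (f y - a) / c) x = c⁻¹ • fderiv ℝ f x := by
  have : (fun y ↦ (f y - a) / c) = c⁻¹ • fun y ↦ f y - a := by
    ext y
    simp only [Pi.smul_apply, smul_eq_mul, div_eq_inv_mul]
  rw [this, fderiv_const_smul_field, Pi.smul_apply, fderiv_sub_const]

theorem sum_fderiv_fderiv_norm_rpow {ι : Type*} [Fintype ι] [DecidableEq ι] (p : ℝ)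
    {x : EuclideanSpace ℝ ι} (hx : x ≠ 0) :
    ∑ i, fderiv ℝ (fun y ↦ fderiv ℝ (fun z : EuclideanSpace ℝ ι ↦ ‖z‖ ^ p) y
        (EuclideanSpace.single i 1)) x (EuclideanSpace.single i 1) =
      p * (p + Fintype.card ι - 2) * ‖x‖ ^ (p - 2) := by
  have hsq : ∑ i, ⟪x, EuclideanSpace.single i (1 : ℝ)⟫ ^ 2 = ‖x‖ ^ 2 := by
    simp [EuclideanSpace.inner_single_right, EuclideanSpace.norm_sq_eq]
  have hpow : ‖x‖ ^ (p - 4) * ‖x‖ ^ 2 = ‖x‖ ^ (p - 2) := by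
    rw [← Real.rpow_add_natCast (norm_ne_zero_iff.mpr hx)]
    ring_nf
  simp only [fderiv_fderiv_norm_rpow_apply p hx, PiLp.norm_single, norm_one, one_pow, mul_one,
    Finset.sum_add_distrib, ← Finset.mul_sum, hsq, Finset.sum_const, Finset.card_univ,
    nsmul_eq_mul]
  linear_combination p * (p - 2) * hpow

section IsHarmonicOn

variable {n : ℕ} {f g : EuclideanSpace ℝ (Fin n) → ℝ} {U V : Set (EuclideanSpace ℝ (Fin n))}

theorem IsHarmonicOn.mono (hf : IsHarmonicOn f U) (hVU : V ⊆ U) : IsHarmonicOn f V :=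
  ⟨hf.1.mono hVU, fun x hx ↦ hf.2 x (hVU hx)⟩

theorem IsHarmonicOn.congr (hU : IsOpen U) (hf : IsHarmonicOn f U) (hfg : Set.EqOn f g U) :
    IsHarmonicOn g U := by
  refine ⟨hf.1.congr hfg.symm, fun x hx ↦ ?_⟩
  have hev : ∀ e, (fun y ↦ fderiv ℝ f y e) =ᶠ[nhds x] fun y ↦ fderiv ℝ g y e := fun e ↦
    ((hfg.eventuallyEq_of_mem (hU.mem_nhds hx)).fderiv (𝕜 := ℝ)).mono fun y hy ↦ congrArg (· e) hy
  rw [← hf.2 x hx]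
  exact Finset.sum_congr rfl fun i _ ↦ by rw [(hev _).fderiv_eq]

theorem IsHarmonicOn.sub_const_div (hf : IsHarmonicOn f U) (a c : ℝ) :
    IsHarmonicOn (fun x ↦ (f x - a) / c) U := by
  refine ⟨(hf.1.sub contDiffOn_const).div_const c, fun x hx ↦ ?_⟩
  have hfirst : ∀ e, (fun y ↦ fderiv ℝ (fun z ↦ (f z - a) / c) y e) =
      c⁻¹ • fun y ↦ fderiv ℝ f y e := by
    intro e
    ext y
    rw [fderiv_sub_const_div, smul_apply, Pi.smul_apply]
  simp only [hfirst, fderiv_const_smul_field, Pi.smul_apply, smul_apply, smul_eq_mul,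
    ← Finset.mul_sum, hf.2 x hx, mul_zero]

theorem isHarmonicOn_norm_rpow_two_sub (n : ℕ) :
    IsHarmonicOn (fun x : EuclideanSpace ℝ (Fin n) ↦ ‖x‖ ^ ((2 : ℝ) - n)) {0}ᶜ :=
  ⟨fun _ hx ↦ (contDiffAt_norm_rpow_of_ne_zero _ hx).contDiffWithinAt, fun x hx ↦ by
    rw [sum_fderiv_fderiv_norm_rpow _ hx, Fintype.card_fin]
    ring⟩

end IsHarmonicOn

theorem rpow_two_sub_sub_one_eq_mul {r : ℝ} (hr : 0 < r) {n : ℕ} (hn : 2 ≤ n) :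
    r ^ ((2 : ℝ) - n) - 1 = r ^ ((2 : ℝ) - n - 1) * (r * (1 - r ^ (n - 2))) := by
  obtain ⟨k, rfl⟩ := Nat.exists_eq_add_of_le hn
  have hexp : (2 : ℝ) - ↑(2 + k) = -k := by push_cast; ring
  rw [Nat.add_sub_cancel_left, hexp, Real.rpow_sub_one hr.ne', Real.rpow_neg hr.le,
    Real.rpow_natCast]
  have : r ^ k ≠ 0 := by positivity
  field_simp

/-- the capacitary potential `u(x) = (‖x‖^(2−n) − 1)/(r^(2−n) − 1)` of `𝔹_r`
in the unit ball (`n ≥ 3`): harmonic in the annulus, boundary values `0` and `1`, and inner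
normal derivative `(n−2)/(r(1 − r^(n−2)))`. -/
theorem statement3 (n : ℕ) (hn : 3 ≤ n) (r : ℝ) (hr0 : 0 < r) (hr1 : r < 1)
    (u : EuclideanSpace ℝ (Fin n) → ℝ)
    (hu : ∀ x : EuclideanSpace ℝ (Fin n), x ≠ 0 →
      u x = (‖x‖ ^ ((2 : ℝ) - n) - 1) / (r ^ ((2 : ℝ) - n) - 1)) :
    IsHarmonicOn u {x : EuclideanSpace ℝ (Fin n) | r < ‖x‖ ∧ ‖x‖ < 1} ∧
    (∀ x : EuclideanSpace ℝ (Fin n), ‖x‖ = 1 → u x = 0) ∧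
    (∀ x : EuclideanSpace ℝ (Fin n), ‖x‖ = r → u x = 1) ∧
    (∀ x : EuclideanSpace ℝ (Fin n), ‖x‖ = r →
      fderiv ℝ u x (-(‖x‖⁻¹ • x)) = ((n : ℝ) - 2) / (r * (1 - r ^ (n - 2)))) := by
  have hne : ∀ {x : EuclideanSpace ℝ (Fin n)} {s : ℝ}, 0 < s → ‖x‖ = s → x ≠ 0 :=
    fun hs hx ↦ norm_ne_zero_iff.mp (hx ▸ hs.ne')
  have hc : r ^ ((2 : ℝ) - n) - 1 ≠ 0 := by
    have hn' : (3 : ℝ) ≤ n := by exact_mod_cast hn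
    have : 1 < r ^ ((2 : ℝ) - n) :=
      Real.one_lt_rpow_of_pos_of_lt_one_of_neg hr0 hr1 (by linarith)
    linarith
  have hu_eq : Set.EqOn (fun x ↦ (‖x‖ ^ ((2 : ℝ) - n) - 1) / (r ^ ((2 : ℝ) - n) - 1)) u {0}ᶜ :=
    fun x hx ↦ (hu x hx).symm
  refine ⟨(((isHarmonicOn_norm_rpow_two_sub n).sub_const_div _ _).congr
      isOpen_compl_singleton hu_eq).mono fun x hx ↦ hne (hr0.trans hx.1) rfl, fun x hx ↦ ?_,
    fun x hx ↦ ?_, fun x hx ↦ ?_⟩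
  · rw [hu x (hne one_pos hx), hx, Real.one_rpow, sub_self, zero_div]
  · rw [hu x (hne hr0 hx), hx, div_self hc]
  · have hx0 := hne hr0 hx
    have hfac := rpow_two_sub_sub_one_eq_mul hr0 (by omega : 2 ≤ n)
    rw [(hu_eq.eventuallyEq_of_mem (isOpen_compl_singleton.mem_nhds hx0)).symm.fderiv_eq,
      fderiv_sub_const_div, smul_apply, map_neg, fderiv_norm_rpow_apply_inv_norm_smul_self _ hx0,
      hx, smul_eq_mul, hfac]
    have hden : r * (1 - r ^ (n - 2)) ≠ 0 := right_ne_zero_of_mul (hfac ▸ hc)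
    have hpow : r ^ ((2 : ℝ) - n - 1) ≠ 0 := by positivity
    field_simp
    ring
end

section
/- Let n ≥ 3 be a natural number. The function Q : (0,1) → ℝ defined by Q(r) = (n−2)/(r(1 − r^(n−2))) is positive and convex on (0,1), and attains its minimum on (0,1) exactly at the point r⋆ = (n−1)^(−1/(n−2)), where Q(r⋆) = (n−1)^((n−1)/(n−2)); that is, Q(r) ≥ (n−1)^((n−1)/(n−2)) for all r ∈ (0,1) with equality if and only if r = (n−1)^(−1/(n−2)). -/
/-!
Write `Q = (n - 2) / g` with `g r = r (1 - r ^ (n - 2)) = r - r ^ (n - 1)`. On `(0, 1)` the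
function `g` is positive and concave, and the reciprocal of a positive concave function is
convex. With `m = n - 2`, the critical point `r⋆` of `g` is characterised by
`(m + 1) r⋆ ^ m = 1`; the strict tangent-line (Bernoulli) inequality for `r ↦ r ^ (m + 1)` at
`r⋆` says exactly that `g` attains a strict maximum there, and `Q r⋆ = (m + 1) / r⋆`.
-/

open Set

theorem ConcaveOn.convexOn_inv {𝕜 E : Type*} [Field 𝕜] [LinearOrder 𝕜] [IsStrictOrderedRing 𝕜]
    [AddCommMonoid E] [Module 𝕜 E] {s : Set E} {f : E → 𝕜} (hf : ConcaveOn 𝕜 s f)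
    (hpos : ∀ x ∈ s, 0 < f x) : ConvexOn 𝕜 s fun x ↦ (f x)⁻¹ := by
  have hinv : ConvexOn 𝕜 (Ioi 0) fun t : 𝕜 ↦ t⁻¹ := by simpa using convexOn_zpow (𝕜 := 𝕜) (-1)
  refine ⟨hf.1, fun x hx y hy a b ha hb hab ↦ ?_⟩
  have hcomb : 0 < a • f x + b • f y := hinv.1 (hpos x hx) (hpos y hy) ha hb hab
  calc (f (a • x + b • y))⁻¹ ≤ (a • f x + b • f y)⁻¹ :=
        inv_anti₀ hcomb (hf.2 hx hy ha hb hab)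
    _ ≤ a • (f x)⁻¹ + b • (f y)⁻¹ := hinv.2 (hpos x hx) (hpos y hy) ha hb hab

theorem concaveOn_mul_one_sub_pow (m : ℕ) : ConcaveOn ℝ (Ici 0) fun r : ℝ ↦ r * (1 - r ^ m) := by
  have hsub : (fun r : ℝ ↦ r * (1 - r ^ m)) = id - fun r ↦ r ^ (m + 1) := by
    ext r; simp only [Pi.sub_apply, id, pow_succ]; ring
  rw [hsub]
  exact (concaveOn_id (convex_Ici 0)).sub (convexOn_pow (m + 1))

theorem mul_one_sub_pow_pos {m : ℕ} (hm : m ≠ 0) {r : ℝ} (hr : r ∈ Ioo 0 1) :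
    0 < r * (1 - r ^ m) :=
  mul_pos hr.1 (sub_pos.2 (pow_lt_one₀ hr.1.le hr.2 hm))

theorem pow_succ_add_mul_sub_lt_pow_succ {m : ℕ} (hm : m ≠ 0) {a r : ℝ} (ha : 0 < a)
    (hr : 0 ≤ r) (hra : r ≠ a) : a ^ (m + 1) + (m + 1) * a ^ m * (r - a) < r ^ (m + 1) := by
  have hp : (1 : ℝ) < (m + 1 : ℕ) := by norm_cast; omega
  have hber := one_add_mul_self_lt_rpow_one_add (s := r / a - 1)
    (by linarith [div_nonneg hr ha.le]) (sub_ne_zero.2 (div_ne_one_of_ne hra)) hp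
  rw [Real.rpow_natCast, add_sub_cancel, div_pow, lt_div_iff₀ (by positivity)] at hber
  calc a ^ (m + 1) + (m + 1) * a ^ m * (r - a)
      = (1 + ((m + 1 : ℕ) : ℝ) * (r / a - 1)) * a ^ (m + 1) := by
        push_cast; field_simp; ring
    _ < r ^ (m + 1) := hber

theorem mul_one_sub_pow_lt_of_ne {m : ℕ} (hm : m ≠ 0) {a r : ℝ} (ha : 0 < a)
    (hcrit : (m + 1) * a ^ m = 1) (hr : 0 ≤ r) (hra : r ≠ a) :
    r * (1 - r ^ m) < a * (1 - a ^ m) := by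
  have htangent := pow_succ_add_mul_sub_lt_pow_succ hm ha hr hra
  rw [hcrit, pow_succ, pow_succ] at htangent
  linarith

theorem div_mul_one_sub_pow_of_mul_pow_eq_one {m : ℕ} (hm : m ≠ 0) {a : ℝ} (ha : a ≠ 0)
    (hcrit : (m + 1) * a ^ m = 1) : (m : ℝ) / (a * (1 - a ^ m)) = (m + 1) / a := by
  have hm' : (m : ℝ) ≠ 0 := by exact_mod_cast hm
  rw [show 1 - a ^ m = m * a ^ m by linear_combination -hcrit]
  field_simp
  linear_combination -hcrit

namespace Real

theorem rpow_neg_one_div_pow {x : ℝ} (hx : 0 ≤ x) {m : ℕ} (hm : m ≠ 0) :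
    (x ^ (-1 / (m : ℝ))) ^ m = x⁻¹ := by
  rw [← rpow_natCast, ← rpow_mul hx, div_mul_cancel₀ _ (by exact_mod_cast hm), rpow_neg_one]

theorem rpow_neg_one_div_mem_Ioo {x : ℝ} (hx : 1 < x) {p : ℝ} (hp : 0 < p) :
    x ^ (-1 / p) ∈ Ioo 0 1 :=
  ⟨rpow_pos_of_pos (by linarith) _,
    rpow_lt_one_of_one_lt_of_neg hx (div_neg_of_neg_of_pos (by norm_num) hp)⟩

theorem div_rpow_neg_one_div {x : ℝ} (hx : 0 < x) {p : ℝ} (hp : p ≠ 0) :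
    x / x ^ (-1 / p) = x ^ ((p + 1) / p) := by
  rw [show (p + 1) / p = 1 - -1 / p by field_simp; ring, rpow_sub hx, rpow_one]

end Real

/-- for `n ≥ 3`, `Q(r) = (n−2)/(r(1 − r^(n−2)))` is positive and convex on
`(0,1)` and attains its minimum over `(0,1)` exactly at `r⋆ = (n−1)^(−1/(n−2))`, with
minimum value `(n−1)^((n−1)/(n−2))`. -/
theorem statement5 (n : ℕ) (hn : 3 ≤ n) (Q : ℝ → ℝ)
    (hQ : ∀ r ∈ Set.Ioo (0 : ℝ) 1, Q r = ((n : ℝ) - 2) / (r * (1 - r ^ (n - 2)))) :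
    (∀ r ∈ Set.Ioo (0 : ℝ) 1, 0 < Q r) ∧
    ConvexOn ℝ (Set.Ioo (0 : ℝ) 1) Q ∧
    Q (((n : ℝ) - 1) ^ (-(1 : ℝ) / ((n : ℝ) - 2))) =
      ((n : ℝ) - 1) ^ (((n : ℝ) - 1) / ((n : ℝ) - 2)) ∧
    (∀ r ∈ Set.Ioo (0 : ℝ) 1, ((n : ℝ) - 1) ^ (((n : ℝ) - 1) / ((n : ℝ) - 2)) ≤ Q r) ∧
    (∀ r ∈ Set.Ioo (0 : ℝ) 1,
      Q r = ((n : ℝ) - 1) ^ (((n : ℝ) - 1) / ((n : ℝ) - 2)) ↔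
      r = ((n : ℝ) - 1) ^ (-(1 : ℝ) / ((n : ℝ) - 2))) := by
  set m := n - 2 with hm_def
  have hm : m ≠ 0 := by omega
  have hm2 : (n : ℝ) - 2 = m := by rw [hm_def, Nat.cast_sub (by omega)]; norm_num
  rw [hm2] at hQ
  rw [show (n : ℝ) - 1 = m + 1 by linarith, hm2]
  set a := ((m : ℝ) + 1) ^ (-1 / (m : ℝ))
  have hm0 : (0 : ℝ) < m := by positivity
  have ha : a ∈ Ioo 0 1 := Real.rpow_neg_one_div_mem_Ioo (by linarith) hm0
  have hcrit : ((m : ℝ) + 1) * a ^ m = 1 := by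
    rw [Real.rpow_neg_one_div_pow (by positivity) hm, mul_inv_cancel₀ (by positivity)]
  have hQa : Q a = ((m : ℝ) + 1) ^ (((m : ℝ) + 1) / m) := by
    rw [hQ a ha, div_mul_one_sub_pow_of_mul_pow_eq_one hm ha.1.ne' hcrit,
      Real.div_rpow_neg_one_div (by positivity) hm0.ne']
  have hQ_lt : ∀ r ∈ Ioo (0 : ℝ) 1, r ≠ a → Q a < Q r := fun r hr hra ↦ by
    rw [hQ a ha, hQ r hr]
    exact div_lt_div_of_pos_left hm0 (mul_one_sub_pow_pos hm hr)
      (mul_one_sub_pow_lt_of_ne hm ha.1 hcrit hr.1.le hra)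
  have hconcave : ConcaveOn ℝ (Ioo 0 1) fun r : ℝ ↦ r * (1 - r ^ m) :=
    (concaveOn_mul_one_sub_pow m).subset (Ioo_subset_Ioi_self.trans Ioi_subset_Ici_self)
      (convex_Ioo 0 1)
  rw [← hQa]
  refine ⟨fun r hr ↦ ?_, ?_, rfl, fun r hr ↦ ?_, fun r hr ↦ ?_⟩
  · rw [hQ r hr]
    exact div_pos hm0 (mul_one_sub_pow_pos hm hr)
  · refine ((hconcave.convexOn_inv fun r hr ↦ mul_one_sub_pow_pos hm hr).smul
      hm0.le).congr fun r hr ↦ ?_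
    simp [hQ r hr, div_eq_mul_inv]
  · rcases eq_or_ne r a with rfl | hra
    exacts [le_rfl, (hQ_lt r hr hra).le]
  · refine ⟨fun h ↦ ?_, fun h ↦ h ▸ rfl⟩
    by_contra hra
    exact (hQ_lt r hr hra).ne' h
end

section
/- For Q(r) = −1/(r · log r) on (0,1) the following trichotomy holds for each real q > 0: if q > e there exist exactly two points r ∈ (0,1) with Q(r) = q, one satisfying 0 < r < e⁻¹ and the other satisfying e⁻¹ < r < 1; if q = e there exists exactly one such point, namely r = e⁻¹; and if 0 < q < e there exists no r ∈ (0,1) with Q(r) = q. -/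
/-!
Since `Q r = (negMulLog r)⁻¹` with `negMulLog r = -r log r`, the equation `Q r = q` on `(0, 1)`
reads `negMulLog r = q⁻¹`. The function `negMulLog` vanishes at `0` and `1`, is positive in
between, increases strictly up to `e⁻¹`, where it attains its maximum `e⁻¹`, and decreases
strictly afterwards; so each value in `(0, e⁻¹)` is taken exactly twice, `e⁻¹` once, and no other
value at all.
-/

open Set

namespace Real

lemma negMulLog_strictMonoOn : StrictMonoOn negMulLog (Icc 0 (exp (-1))) := by
  rw [negMulLog_eq_neg]
  exact mul_log_strictAntiOn.neg

lemma negMulLog_strictAntiOn : StrictAntiOn negMulLog (Ici (exp (-1))) := by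
  rw [negMulLog_eq_neg]
  exact mul_log_strictMonoOn.neg

lemma negMulLog_exp_neg_one : negMulLog (exp (-1)) = exp (-1) := by
  simp [negMulLog]

lemma negMulLog_le_exp_neg_one {x : ℝ} (hx : 0 ≤ x) : negMulLog x ≤ exp (-1) := by
  rw [← negMulLog_exp_neg_one]
  rcases le_total x (exp (-1)) with h | h
  · exact negMulLog_strictMonoOn.monotoneOn ⟨hx, h⟩ ⟨(exp_pos _).le, le_rfl⟩ h
  · exact negMulLog_strictAntiOn.antitoneOn (mem_Ici.2 le_rfl) h h

lemma negMulLog_pos {x : ℝ} (h0 : 0 < x) (h1 : x < 1) : 0 < negMulLog x :=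
  mul_pos_of_neg_of_neg (neg_neg_of_pos h0) (log_neg h0 h1)

lemma mapsTo_negMulLog_Ioo : MapsTo negMulLog (Ioo 0 1) (Ioc 0 (exp (-1))) :=
  fun _ hx ↦ ⟨negMulLog_pos hx.1 hx.2, negMulLog_le_exp_neg_one hx.1.le⟩

lemma exp_neg_one_lt_one : exp (-1) < 1 :=
  exp_lt_one_iff.2 (by norm_num)

lemma neg_one_div_mul_log (x : ℝ) : -1 / (x * log x) = (negMulLog x)⁻¹ := by
  rw [negMulLog, neg_mul, inv_neg, neg_div, one_div]

lemma setOf_negMulLog_eq_of_mem_Ioo {c : ℝ} (hc : c ∈ Ioo 0 (exp (-1))) :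
    ∃ r₁ ∈ Ioo 0 (exp (-1)), ∃ r₂ ∈ Ioo (exp (-1)) 1,
      {r ∈ Ioo (0 : ℝ) 1 | negMulLog r = c} = {r₁, r₂} := by
  obtain ⟨r₁, hr₁, hr₁c⟩ := intermediate_value_Ioo (exp_pos _).le
    continuous_negMulLog.continuousOn
    (by rwa [negMulLog_zero, negMulLog_exp_neg_one] : c ∈ Ioo (negMulLog 0) (negMulLog (exp (-1))))
  obtain ⟨r₂, hr₂, hr₂c⟩ := intermediate_value_Ioo' exp_neg_one_lt_one.le
    continuous_negMulLog.continuousOn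
    (by rwa [negMulLog_one, negMulLog_exp_neg_one] : c ∈ Ioo (negMulLog 1) (negMulLog (exp (-1))))
  refine ⟨r₁, hr₁, r₂, hr₂, Set.ext fun r ↦ ⟨fun ⟨hr, hrc⟩ ↦ ?_, ?_⟩⟩
  · rcases lt_trichotomy r (exp (-1)) with h | rfl | h
    · exact .inl <| negMulLog_strictMonoOn.injOn ⟨hr.1.le, h.le⟩ ⟨hr₁.1.le, hr₁.2.le⟩
        (hrc.trans hr₁c.symm)
    · exact absurd (hrc.symm.trans negMulLog_exp_neg_one) hc.2.ne
    · exact .inr <| negMulLog_strictAntiOn.injOn (mem_Ici.2 h.le) (mem_Ici.2 hr₂.1.le)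
        (hrc.trans hr₂c.symm)
  · rintro (rfl | rfl)
    · exact ⟨⟨hr₁.1, hr₁.2.trans exp_neg_one_lt_one⟩, hr₁c⟩
    · exact ⟨⟨(exp_pos _).trans hr₂.1, hr₂.2⟩, hr₂c⟩

lemma setOf_negMulLog_eq_exp_neg_one :
    {r ∈ Ioo (0 : ℝ) 1 | negMulLog r = exp (-1)} = {exp (-1)} := by
  refine Set.ext fun r ↦ ⟨fun ⟨hr, hre⟩ ↦ ?_, ?_⟩
  · rw [← negMulLog_exp_neg_one] at hre
    rcases le_total r (exp (-1)) with h | h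
    · exact negMulLog_strictMonoOn.injOn ⟨hr.1.le, h⟩ ⟨(exp_pos _).le, le_rfl⟩ hre
    · exact negMulLog_strictAntiOn.injOn (mem_Ici.2 h) (mem_Ici.2 le_rfl) hre
  · rintro rfl
    exact ⟨⟨exp_pos _, exp_neg_one_lt_one⟩, negMulLog_exp_neg_one⟩

lemma setOf_negMulLog_eq_of_notMem_Ioc {c : ℝ} (hc : c ∉ Ioc 0 (exp (-1))) :
    {r ∈ Ioo (0 : ℝ) 1 | negMulLog r = c} = ∅ :=
  Set.eq_empty_of_forall_notMem fun _ ⟨hr, hrc⟩ ↦ hc (hrc ▸ mapsTo_negMulLog_Ioo hr)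

end Real

open Real

theorem statement6_general (Q : ℝ → ℝ)
    (hQ : ∀ r ∈ Set.Ioo (0 : ℝ) 1, Q r = -1 / (r * Real.log r))
    (q : ℝ) :
    (Real.exp 1 < q →
      ∃ r₁ r₂ : ℝ, r₁ ∈ Set.Ioo (0 : ℝ) (Real.exp 1)⁻¹ ∧
        r₂ ∈ Set.Ioo (Real.exp 1)⁻¹ 1 ∧
        {r ∈ Set.Ioo (0 : ℝ) 1 | Q r = q} = {r₁, r₂}) ∧
    (q = Real.exp 1 →
      {r ∈ Set.Ioo (0 : ℝ) 1 | Q r = q} = {(Real.exp 1)⁻¹}) ∧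
    (q < Real.exp 1 →
      {r ∈ Set.Ioo (0 : ℝ) 1 | Q r = q} = ∅) := by
  have hlevel : {r ∈ Ioo (0 : ℝ) 1 | Q r = q} = {r ∈ Ioo (0 : ℝ) 1 | negMulLog r = q⁻¹} :=
    sep_ext_iff.2 fun r hr ↦ by rw [hQ r hr, neg_one_div_mul_log, inv_eq_iff_eq_inv]
  simp only [hlevel, ← exp_neg]
  refine ⟨fun hq ↦ ?_, fun hq ↦ ?_, fun hq ↦ ?_⟩
  · obtain ⟨r₁, hr₁, r₂, hr₂, h⟩ := setOf_negMulLog_eq_of_mem_Ioo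
      ⟨inv_pos.2 ((exp_pos 1).trans hq), by rw [exp_neg]; exact inv_strictAnti₀ (exp_pos 1) hq⟩
    exact ⟨r₁, r₂, hr₁, hr₂, h⟩
  · rw [hq, ← exp_neg]
    exact setOf_negMulLog_eq_exp_neg_one
  · refine setOf_negMulLog_eq_of_notMem_Ioc fun ⟨hpos, hle⟩ ↦ ?_
    rw [exp_neg] at hle
    exact (inv_strictAnti₀ (inv_pos.1 hpos) hq).not_ge hle

/-- trichotomy for the equation `−1/(r log r) = q` on `(0,1)`: exactly two
solutions (one on each side of `e⁻¹`) if `q > e`, exactly the solution `r = e⁻¹` if `q = e`,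
and no solution if `0 < q < e`. -/
theorem statement6 (Q : ℝ → ℝ)
    (hQ : ∀ r ∈ Set.Ioo (0 : ℝ) 1, Q r = -1 / (r * Real.log r))
    (q : ℝ) (hq : 0 < q) :
    (Real.exp 1 < q →
      ∃ r₁ r₂ : ℝ, r₁ ∈ Set.Ioo (0 : ℝ) (Real.exp 1)⁻¹ ∧
        r₂ ∈ Set.Ioo (Real.exp 1)⁻¹ 1 ∧
        {r ∈ Set.Ioo (0 : ℝ) 1 | Q r = q} = {r₁, r₂}) ∧
    (q = Real.exp 1 →
      {r ∈ Set.Ioo (0 : ℝ) 1 | Q r = q} = {(Real.exp 1)⁻¹}) ∧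
    (q < Real.exp 1 →
      {r ∈ Set.Ioo (0 : ℝ) 1 | Q r = q} = ∅) :=
  statement6_general Q hQ q
end

section
/- Let n ≥ 3, set r⋆ = (n−1)^(−1/(n−2)) and Q⋆ = (n−1)^((n−1)/(n−2)), and let Q(r) = (n−2)/(r(1 − r^(n−2))) on (0,1). Then for each real q > 0: if q > Q⋆ there exist exactly two points r ∈ (0,1) with Q(r) = q, one satisfying 0 < r < r⋆ and the other satisfying r⋆ < r < 1; if q = Q⋆ there exists exactly one such point, namely r = r⋆; and if 0 < q < Q⋆ there exists no r ∈ (0,1) with Q(r) = q. -/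
/-!
With `m = n - 2`, on `(0,1)` we have `Q r = m / g r` for `g r = r - r^(m+1)`, so `Q r = q` means
`g r = m / q`. The function `g` vanishes at `0` and `1`, and since `g' r = 1 - (m+1) r^m` it
increases strictly up to `r⋆ = (m+1)^(-1/m)` and decreases strictly after it, with maximum
`g r⋆ = m / Q⋆`. A level `y` of such a unimodal function is attained twice, once, or never
according as `0 < y < g r⋆`, `y = g r⋆` or `y > g r⋆`.
-/

open Set

section Unimodal

variable {f : ℝ → ℝ} {a b c y : ℝ}
  (hmono : StrictMonoOn f (Icc a c)) (hanti : StrictAntiOn f (Icc c b))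
include hmono hanti

theorem lt_of_strictMonoOn_of_strictAntiOn {r : ℝ} (hr : r ∈ Icc a b) (hrc : r ≠ c) :
    f r < f c := by
  rcases hrc.lt_or_gt with h | h
  · exact hmono ⟨hr.1, h.le⟩ ⟨hr.1.trans h.le, le_rfl⟩ h
  · exact hanti ⟨le_rfl, h.le.trans hr.2⟩ ⟨h.le, hr.2⟩ h

theorem levelSet_eq_pair_of_unimodal (hac : a ≤ c) (hcb : c ≤ b)
    (hf : ContinuousOn f (Icc a b)) (hya : f a < y) (hyb : f b < y) (hyc : y < f c) :
    ∃ r₁ ∈ Ioo a c, ∃ r₂ ∈ Ioo c b, {r ∈ Ioo a b | f r = y} = {r₁, r₂} := by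
  obtain ⟨r₁, hr₁, hfr₁⟩ :=
    intermediate_value_Ioo hac (hf.mono (Icc_subset_Icc_right hcb)) ⟨hya, hyc⟩
  obtain ⟨r₂, hr₂, hfr₂⟩ :=
    intermediate_value_Ioo' hcb (hf.mono (Icc_subset_Icc_left hac)) ⟨hyb, hyc⟩
  refine ⟨r₁, hr₁, r₂, hr₂, ?_⟩
  ext r
  simp only [mem_ofPred_eq, mem_insert_iff, mem_singleton_iff]
  constructor
  · rintro ⟨hr, hfr⟩
    rcases lt_trichotomy r c with h | rfl | h
    · exact .inl <| hmono.injOn ⟨hr.1.le, h.le⟩ (Ioo_subset_Icc_self hr₁) (hfr.trans hfr₁.symm)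
    · exact absurd hfr hyc.ne'
    · exact .inr <| hanti.injOn ⟨h.le, hr.2.le⟩ (Ioo_subset_Icc_self hr₂) (hfr.trans hfr₂.symm)
  · rintro (rfl | rfl)
    · exact ⟨⟨hr₁.1, hr₁.2.trans_le hcb⟩, hfr₁⟩
    · exact ⟨⟨hac.trans_lt hr₂.1, hr₂.2⟩, hfr₂⟩

theorem levelSet_eq_singleton_of_unimodal (hc : c ∈ Ioo a b) :
    {r ∈ Ioo a b | f r = f c} = {c} := by
  ext r
  simp only [mem_ofPred_eq, mem_singleton_iff]
  refine ⟨fun ⟨hr, hfr⟩ => ?_, by rintro rfl; exact ⟨hc, rfl⟩⟩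
  by_contra hrc
  exact (lt_of_strictMonoOn_of_strictAntiOn hmono hanti (Ioo_subset_Icc_self hr) hrc).ne hfr

theorem levelSet_eq_empty_of_unimodal (hcy : f c < y) : {r ∈ Ioo a b | f r = y} = ∅ := by
  refine eq_empty_of_forall_notMem fun r ⟨hr, hfr⟩ => ?_
  rcases eq_or_ne r c with rfl | hrc
  · exact hcy.ne hfr
  · exact (lt_of_strictMonoOn_of_strictAntiOn hmono hanti (Ioo_subset_Icc_self hr) hrc).trans
      hcy |>.ne hfr

end Unimodal

section SubPowSucc

theorem hasDerivAt_sub_pow_succ (m : ℕ) (x : ℝ) :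
    HasDerivAt (fun r : ℝ => r - r ^ (m + 1)) (1 - (m + 1) * x ^ m) x := by
  simpa using (hasDerivAt_id' x).fun_sub (hasDerivAt_pow (m + 1) x)

theorem continuous_sub_pow_succ (m : ℕ) : Continuous fun r : ℝ => r - r ^ (m + 1) := by
  fun_prop

variable {m : ℕ} {c : ℝ} (hm : m ≠ 0) (hc : (m + 1) * c ^ m = 1)
include hm hc

theorem strictMonoOn_sub_pow_succ : StrictMonoOn (fun r : ℝ => r - r ^ (m + 1)) (Icc 0 c) := by
  refine strictMonoOn_of_deriv_pos (convex_Icc _ _) (continuous_sub_pow_succ m).continuousOn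
    fun x hx => ?_
  rw [interior_Icc] at hx
  rw [(hasDerivAt_sub_pow_succ m x).deriv, sub_pos]
  calc (m + 1 : ℝ) * x ^ m < (m + 1) * c ^ m :=
        mul_lt_mul_of_pos_left (pow_lt_pow_left₀ hx.2 hx.1.le hm) (by positivity)
    _ = 1 := hc

theorem strictAntiOn_sub_pow_succ (hc₀ : 0 ≤ c) :
    StrictAntiOn (fun r : ℝ => r - r ^ (m + 1)) (Ici c) := by
  refine strictAntiOn_of_deriv_neg (convex_Ici _) (continuous_sub_pow_succ m).continuousOn
    fun x hx => ?_
  rw [interior_Ici] at hx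
  rw [(hasDerivAt_sub_pow_succ m x).deriv, sub_neg]
  calc 1 = (m + 1 : ℝ) * c ^ m := hc.symm
    _ < (m + 1) * x ^ m := mul_lt_mul_of_pos_left (pow_lt_pow_left₀ hx hc₀ hm) (by positivity)

end SubPowSucc

theorem div_mul_one_sub_pow_eq_iff {m : ℕ} (hm : m ≠ 0) {q r : ℝ} (hq : q ≠ 0)
    (hr : r ∈ Ioo (0 : ℝ) 1) :
    (m : ℝ) / (r * (1 - r ^ m)) = q ↔ r - r ^ (m + 1) = m / q := by
  have hpos : 0 < r * (1 - r ^ m) := mul_pos hr.1 (sub_pos.2 (pow_lt_one₀ hr.1.le hr.2 hm))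
  rw [div_eq_iff hpos.ne', eq_div_iff hq, pow_succ]
  constructor <;> intro h <;> linarith

theorem rpow_neg_one_div_natCast_pow {x : ℝ} (hx : 0 ≤ x) {m : ℕ} (hm : m ≠ 0) :
    (x ^ (-1 / (m : ℝ))) ^ m = x⁻¹ := by
  rw [neg_div, one_div, Real.rpow_neg hx, inv_pow, Real.rpow_inv_natCast_pow hx hm]

theorem rpow_add_one_div_mul_rpow_neg_one_div {x p : ℝ} (hx : 0 < x) (hp : p ≠ 0) :
    x ^ ((p + 1) / p) * x ^ (-1 / p) = x := by
  rw [← Real.rpow_add hx, ← add_div, add_neg_cancel_right, div_self hp, Real.rpow_one]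

/-- for `n ≥ 3`, trichotomy for `Q(r) = (n−2)/(r(1−r^(n−2))) = q` on `(0,1)`
with critical radius `r⋆ = (n−1)^(−1/(n−2))` and critical value `Q⋆ = (n−1)^((n−1)/(n−2))`:
exactly two solutions (one on each side of `r⋆`) if `q > Q⋆`, exactly `r = r⋆` if `q = Q⋆`,
and no solution if `0 < q < Q⋆`. -/
theorem statement7 (n : ℕ) (hn : 3 ≤ n) (rstar Qstar : ℝ)
    (hrstar : rstar = ((n : ℝ) - 1) ^ (-(1 : ℝ) / ((n : ℝ) - 2)))
    (hQstar : Qstar = ((n : ℝ) - 1) ^ (((n : ℝ) - 1) / ((n : ℝ) - 2)))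
    (Q : ℝ → ℝ)
    (hQ : ∀ r ∈ Set.Ioo (0 : ℝ) 1, Q r = ((n : ℝ) - 2) / (r * (1 - r ^ (n - 2))))
    (q : ℝ) (hq : 0 < q) :
    (Qstar < q →
      ∃ r₁ r₂ : ℝ, r₁ ∈ Set.Ioo 0 rstar ∧ r₂ ∈ Set.Ioo rstar 1 ∧
        {r ∈ Set.Ioo (0 : ℝ) 1 | Q r = q} = {r₁, r₂}) ∧
    (q = Qstar → {r ∈ Set.Ioo (0 : ℝ) 1 | Q r = q} = {rstar}) ∧
    (q < Qstar → {r ∈ Set.Ioo (0 : ℝ) 1 | Q r = q} = ∅) := by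
  obtain ⟨m, rfl⟩ : ∃ m, n = m + 2 := ⟨n - 2, by omega⟩
  have hm : m ≠ 0 := by omega
  have hm₀ : (0 : ℝ) < m := by positivity
  have hn₁ : ((m + 2 : ℕ) : ℝ) - 1 = m + 1 := by push_cast; ring
  have hn₂ : ((m + 2 : ℕ) : ℝ) - 2 = m := by push_cast; ring
  rw [hn₁, hn₂] at hrstar hQstar
  simp only [hn₂, Nat.add_sub_cancel] at hQ
  have hrstar_pow : (m + 1) * rstar ^ m = 1 := by
    rw [hrstar, rpow_neg_one_div_natCast_pow (by positivity) hm, mul_inv_cancel₀ (by positivity)]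
  have hrstar₀ : 0 < rstar := hrstar ▸ Real.rpow_pos_of_pos (by positivity) _
  have hrstar₁ : rstar < 1 := hrstar ▸ Real.rpow_lt_one_of_one_lt_of_neg (by linarith)
    (div_neg_of_neg_of_pos (by norm_num) hm₀)
  have hQstar₀ : 0 < Qstar := hQstar ▸ Real.rpow_pos_of_pos (by positivity) _
  have hQstar_mul : Qstar * rstar = m + 1 := by
    rw [hQstar, hrstar, rpow_add_one_div_mul_rpow_neg_one_div (by positivity) hm₀.ne']
  set g : ℝ → ℝ := fun r => r - r ^ (m + 1)
  have hg_max : g rstar = m / Qstar := by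
    rw [eq_div_iff hQstar₀.ne']
    linear_combination (1 - rstar ^ m) * hQstar_mul - hrstar_pow
  have hlevel : {r ∈ Ioo (0 : ℝ) 1 | Q r = q} = {r ∈ Ioo (0 : ℝ) 1 | g r = m / q} := by
    ext r
    exact and_congr_right fun hr => by rw [hQ r hr]; exact div_mul_one_sub_pow_eq_iff hm hq.ne' hr
  have hmono : StrictMonoOn g (Icc 0 rstar) := strictMonoOn_sub_pow_succ hm hrstar_pow
  have hanti : StrictAntiOn g (Icc rstar 1) :=
    (strictAntiOn_sub_pow_succ hm hrstar_pow hrstar₀.le).mono Icc_subset_Ici_self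
  rw [hlevel]
  refine ⟨fun hlt => ?_, fun heq => ?_, fun hgt => ?_⟩
  · obtain ⟨r₁, hr₁, r₂, hr₂, h⟩ := levelSet_eq_pair_of_unimodal hmono hanti hrstar₀.le
      hrstar₁.le (continuous_sub_pow_succ m).continuousOn (by simp [g]; positivity)
      (by simp [g]; positivity) (hg_max ▸ div_lt_div_of_pos_left hm₀ hQstar₀ hlt)
    exact ⟨r₁, r₂, hr₁, hr₂, h⟩
  · rw [heq, ← hg_max]
    exact levelSet_eq_singleton_of_unimodal hmono hanti ⟨hrstar₀, hrstar₁⟩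
  · exact levelSet_eq_empty_of_unimodal hmono hanti (hg_max ▸ div_lt_div_of_pos_left hm₀ hq hgt)
end
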